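/- arXiv:2405.02665 — 5 statements merged into one kernel-verified Lean document; each statement's English description precedes it below -/
import Mathlib

section
/- For probability distributions P, Q, R on a finite space 𝒴 and real numbers α, β ≥ 0, the hockey-stick divergence satisfies the weak triangle inequality D_{e^{α+β}}(P ‖ R) ≤ D_{e^α}(P ‖ Q) + e^α · D_{e^β}(Q ‖ R). -/
open Finset

/-- weak triangle inequality (group privacy) for the hockey-stick
divergence: `D_{e^{α+β}}(P ‖ R) ≤ D_{e^α}(P ‖ Q) + e^α · D_{e^β}(Q ‖ R)`. -/
theorem hockey_stick_weak_triangle {Y : Type*} [Fintype Y]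
    (P Q R : Y → ℝ)
    (hP0 : ∀ y, 0 ≤ P y) (hP1 : ∑ y, P y = 1)
    (hQ0 : ∀ y, 0 ≤ Q y) (hQ1 : ∑ y, Q y = 1)
    (hR0 : ∀ y, 0 ≤ R y) (hR1 : ∑ y, R y = 1)
    (α β : ℝ) (hα : 0 ≤ α) (hβ : 0 ≤ β) :
    (∑ y, max (P y - Real.exp (α + β) * R y) 0)
      ≤ (∑ y, max (P y - Real.exp α * Q y) 0)
        + Real.exp α * ∑ y, max (Q y - Real.exp β * R y) 0 := by
  rw [mul_sum, ← sum_add_distrib]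
  apply sum_le_sum
  intro y _
  have h : P y - Real.exp (α + β) * R y
      = (P y - Real.exp α * Q y) + Real.exp α * (Q y - Real.exp β * R y) := by
    rw [Real.exp_add]; ring
  rw [h, mul_max_of_nonneg _ _ (Real.exp_pos α).le, mul_zero]
  exact max_le (add_le_add (le_max_left _ _) (le_max_left _ _)) (by positivity)
end

section
/- For any fixed constant K > 0, the function f(d) = ln(1 + K·(e^d - 1)/(e^d + 1)) is concave on [0, ∞). -/
/-! Writing `g d = (e^d - 1)/(e^d + 1)`, one computes `g' d = 1 / (1 + cosh d)`, which decreases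
on `[0, ∞)`, so `g` is concave there. Since `g ≥ 0` on `[0, ∞)`, the function `1 + K g` is
positive and concave, and composing with the increasing concave function `log` preserves
concavity. -/

open Real Set

theorem ConcaveOn.comp_of_mapsTo {𝕜 E α β : Type*} [Semiring 𝕜] [PartialOrder 𝕜]
    [AddCommMonoid E] [AddCommMonoid α] [PartialOrder α] [AddCommMonoid β] [PartialOrder β]
    [SMul 𝕜 E] [SMul 𝕜 α] [SMul 𝕜 β] {s : Set E} {t : Set β} {f : E → β} {g : β → α}
    (hg : ConcaveOn 𝕜 t g) (hg_mono : MonotoneOn g t) (hf : ConcaveOn 𝕜 s f)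
    (hst : MapsTo f s t) : ConcaveOn 𝕜 s (g ∘ f) := by
  refine ⟨hf.1, fun x hx y hy a b ha hb hab => ?_⟩
  have hxy : a • x + b • y ∈ s := hf.1 hx hy ha hb hab
  calc a • g (f x) + b • g (f y) ≤ g (a • f x + b • f y) :=
        hg.2 (hst hx) (hst hy) ha hb hab
    _ ≤ g (f (a • x + b • y)) :=
        hg_mono (hg.1 (hst hx) (hst hy) ha hb hab) (hst hxy) (hf.2 hx hy ha hb hab)

theorem ConcaveOn.log {E : Type*} [AddCommMonoid E] [SMul ℝ E] {s : Set E} {f : E → ℝ}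
    (hf : ConcaveOn ℝ s f) (hf_pos : ∀ x ∈ s, 0 < f x) : ConcaveOn ℝ s (fun x => Real.log (f x)) :=
  strictConcaveOn_log_Ioi.concaveOn.comp_of_mapsTo strictMonoOn_log.monotoneOn hf hf_pos

theorem hasDerivAt_exp_sub_one_div_exp_add_one (x : ℝ) :
    HasDerivAt (fun d => (exp d - 1) / (exp d + 1)) (1 + cosh x)⁻¹ x := by
  have hx : exp x + 1 ≠ 0 := by positivity
  refine (((hasDerivAt_exp x).sub_const 1).div ((hasDerivAt_exp x).add_const 1) hx).congr_deriv ?_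
  rw [cosh_eq, exp_neg]
  field_simp
  ring

theorem concaveOn_exp_sub_one_div_exp_add_one :
    ConcaveOn ℝ (Ici 0) (fun d => (exp d - 1) / (exp d + 1)) := by
  have hderiv : deriv (fun d => (exp d - 1) / (exp d + 1)) = fun x => (1 + cosh x)⁻¹ :=
    funext fun x => (hasDerivAt_exp_sub_one_div_exp_add_one x).deriv
  refine AntitoneOn.concaveOn_of_deriv (convex_Ici 0)
    (fun x _ => (hasDerivAt_exp_sub_one_div_exp_add_one x).continuousAt.continuousWithinAt)
    (fun x _ => (hasDerivAt_exp_sub_one_div_exp_add_one x).differentiableAt.differentiableWithinAt)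
    ?_
  rw [hderiv, interior_Ici]
  intro x hx y hy hxy
  have hcosh : cosh x ≤ cosh y := cosh_le_cosh.2 (by rw [abs_of_pos hx, abs_of_pos hy]; exact hxy)
  exact inv_anti₀ (by positivity) (by linarith)

theorem exp_sub_one_div_exp_add_one_nonneg {d : ℝ} (hd : 0 ≤ d) :
    0 ≤ (exp d - 1) / (exp d + 1) :=
  div_nonneg (sub_nonneg.2 (one_le_exp hd)) (by positivity)

/-- for any `K > 0`, the function
`d ↦ ln(1 + K·(e^d - 1)/(e^d + 1))` is concave on `[0, ∞)`. -/
theorem log_one_add_tanh_concave (K : ℝ) (hK : 0 < K) :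
    ConcaveOn ℝ (Set.Ici (0 : ℝ))
      (fun d => Real.log (1 + K * ((Real.exp d - 1) / (Real.exp d + 1)))) := by
  have hconc : ConcaveOn ℝ (Ici 0) (fun d => 1 + K * ((exp d - 1) / (exp d + 1))) := by
    refine ((concaveOn_exp_sub_one_div_exp_add_one.smul hK.le).add_const 1).congr fun d _ => ?_
    simp only [Pi.add_apply, smul_eq_mul]
    ring
  refine hconc.log fun d hd => ?_
  have := exp_sub_one_div_exp_add_one_nonneg hd
  positivity
end

section
/- Let P, Q be probability distributions on a finite space such that D_α(P ‖ Q) = 0 and D_α(Q ‖ P) = 0 for some α ≥ 1 (i.e., P(y) ≤ α Q(y) and Q(y) ≤ α P(y) pointwise). Then there exist probability distributions M, N such that P = (α/(α+1))·M + (1/(α+1))·N and Q = (1/(α+1))·M + (α/(α+1))·N. -/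
open Finset

/-- decomposition of a pair of distributions with pointwise
likelihood ratio bounded by `α` into mixtures of two common distributions. -/
theorem dp_pair_decomposition {Y : Type*} [Fintype Y]
    (P Q : Y → ℝ)
    (hP0 : ∀ y, 0 ≤ P y) (hP1 : ∑ y, P y = 1)
    (hQ0 : ∀ y, 0 ≤ Q y) (hQ1 : ∑ y, Q y = 1)
    (α : ℝ) (hα : 1 ≤ α)
    (hPQ : ∀ y, P y ≤ α * Q y) (hQP : ∀ y, Q y ≤ α * P y) :
    ∃ M N : Y → ℝ,
      (∀ y, 0 ≤ M y) ∧ (∑ y, M y = 1) ∧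
      (∀ y, 0 ≤ N y) ∧ (∑ y, N y = 1) ∧
      (∀ y, P y = (α / (α + 1)) * M y + (1 / (α + 1)) * N y) ∧
      (∀ y, Q y = (1 / (α + 1)) * M y + (α / (α + 1)) * N y) := by
  rcases eq_or_lt_of_le hα with h1 | h1
  · -- α = 1, so P = Q
    have hPQeq : ∀ y, P y = Q y := fun y =>
      le_antisymm (by have := hPQ y; rwa [← h1, one_mul] at this)
        (by have := hQP y; rwa [← h1, one_mul] at this)
    refine ⟨P, P, hP0, hP1, hP0, hP1, ?_, ?_⟩
    · intro y; rw [← h1]; ring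
    · intro y; rw [hPQeq y, ← h1]; ring
  · have hne : α - 1 ≠ 0 := by linarith
    refine ⟨fun y => (α * P y - Q y) / (α - 1),
            fun y => (α * Q y - P y) / (α - 1), ?_, ?_, ?_, ?_, ?_, ?_⟩
    · intro y; apply div_nonneg (by linarith [hQP y]) (by linarith)
    · rw [← Finset.sum_div]
      rw [show ∑ y, (α * P y - Q y) = α * (∑ y, P y) - ∑ y, Q y by
        rw [Finset.mul_sum, ← Finset.sum_sub_distrib]]
      rw [hP1, hQ1]; field_simp
    · intro y; apply div_nonneg (by linarith [hPQ y]) (by linarith)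
    · rw [← Finset.sum_div]
      rw [show ∑ y, (α * Q y - P y) = α * (∑ y, Q y) - ∑ y, P y by
        rw [Finset.mul_sum, ← Finset.sum_sub_distrib]]
      rw [hP1, hQ1]; field_simp
    · intro y
      have h2 : α + 1 ≠ 0 := by linarith
      field_simp
      ring
    · intro y
      have h2 : α + 1 ≠ 0 := by linarith
      field_simp
      ring
end

section
/- Let A = a·I_𝒳 + (b·I_ℬ + c·𝟙_ℬ) ⊗ 𝟙_𝒞 be a matrix indexed by 𝒳 = ℬ × 𝒞 with |ℬ| = s, |𝒞| = t, where a = (e^α - e^{(1-r)α})/D, b = (e^{(1-r)α} - 1)/D, c = 1/D, and D = e^α + (t-1)e^{(1-r)α} + (s-1)t, for α > 0 and 0 < r < 1. Then A is invertible with inverse A^{-1} = a'·I_𝒳 + (b'·I_ℬ + c'·𝟙_ℬ) ⊗ 𝟙_𝒞, where a' = D/(e^α - e^{(1-r)α}), b' = -(e^{(1-r)α}-1)·D/((e^α - e^{(1-r)α})(e^α + (t-1)e^{(1-r)α} - t)), and c' = -1/(e^α + (t-1)e^{(1-r)α} - t). -/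
/-!
Matrices of the form `x • I + (y • I_ℬ + z • 𝟙_ℬ) ⊗ 𝟙_𝒞` are closed under multiplication, since
`𝟙_n * 𝟙_n = n • 𝟙_n`, and their product is computed on the coefficients `(x, y, z)`. So `A * A' = I`
reduces to three scalar identities in `D` and `M = e^α + (t - 1) e^{(1-r)α} - t`, both positive, and
`A' * A = I` follows because a one-sided inverse of a square matrix is two-sided.
-/

open Matrix Kronecker

local notation "𝟙" => Matrix.of fun _ _ => 1

section

variable {R : Type*} [CommRing R] {B C : Type*} [DecidableEq B] [DecidableEq C]

variable (B C) in
def gkrrMatrix (x y z : R) : Matrix (B × C) (B × C) R :=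
  x • 1 + (y • 1 + z • 𝟙) ⊗ₖ (𝟙 : Matrix C C R)

theorem gkrrMatrix_one_zero_zero : gkrrMatrix B C (1 : R) 0 0 = 1 := by
  simp [gkrrMatrix]

theorem of_one_mul_of_one {n : Type*} [Fintype n] :
    (𝟙 : Matrix n n R) * 𝟙 = (Fintype.card n : R) • 𝟙 := by
  ext i j
  simp [Matrix.mul_apply]

variable [Fintype B] [Fintype C]

theorem gkrrMatrix_mul (x y z x' y' z' : R) :
    gkrrMatrix B C x y z * gkrrMatrix B C x' y' z' =
      gkrrMatrix B C (x * x') (x * y' + x' * y + Fintype.card C * (y * y'))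
        (x * z' + x' * z + Fintype.card C * (y * z' + z * y' + Fintype.card B * (z * z'))) := by
  simp only [gkrrMatrix, add_mul, mul_add, smul_mul_assoc, mul_smul_comm, one_mul, mul_one,
    ← mul_kronecker_mul, of_one_mul_of_one, add_kronecker, smul_kronecker, kronecker_smul]
  module

theorem gkrrMatrix_mul_eq_one {K : Type*} [Field K] {s t E F D M : K}
    (hs : (Fintype.card B : K) = s) (ht : (Fintype.card C : K) = t)
    (hD : E + (t - 1) * F + (s - 1) * t = D) (hM : E + (t - 1) * F - t = M)
    (hEF : E - F ≠ 0) (hD0 : D ≠ 0) (hM0 : M ≠ 0) :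
    gkrrMatrix B C ((E - F) / D) ((F - 1) / D) (1 / D) *
      gkrrMatrix B C (D / (E - F)) (-((F - 1) * D) / ((E - F) * M)) (-1 / M) = 1 := by
  rw [gkrrMatrix_mul, ← gkrrMatrix_one_zero_zero, hs, ht]
  congr 1
  · field_simp
  · field_simp
    linear_combination (1 - F) * hM
  · field_simp
    linear_combination (F - E) * hD - D * hM

end

theorem gkrr_matrix_inverse_general {B C : Type*} [Fintype B] [Fintype C]
    [DecidableEq B] [DecidableEq C]
    (s t : ℕ) (hB : Fintype.card B = s) (hC : Fintype.card C = t)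
    (α r : ℝ) (hα : 0 < α) (hr0 : 0 < r) (hr1 : r < 1) :
    let D : ℝ := Real.exp α + ((t : ℝ) - 1) * Real.exp ((1 - r) * α)
        + ((s : ℝ) - 1) * t
    let a : ℝ := (Real.exp α - Real.exp ((1 - r) * α)) / D
    let b : ℝ := (Real.exp ((1 - r) * α) - 1) / D
    let c : ℝ := 1 / D
    let a' : ℝ := D / (Real.exp α - Real.exp ((1 - r) * α))
    let b' : ℝ := -((Real.exp ((1 - r) * α) - 1) * D) /
        ((Real.exp α - Real.exp ((1 - r) * α))
          * (Real.exp α + ((t : ℝ) - 1) * Real.exp ((1 - r) * α) - t))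
    let c' : ℝ := -1 / (Real.exp α + ((t : ℝ) - 1) * Real.exp ((1 - r) * α) - t)
    let A : Matrix (B × C) (B × C) ℝ :=
      a • (1 : Matrix (B × C) (B × C) ℝ) +
        ((b • (1 : Matrix B B ℝ) + c • (Matrix.of fun _ _ => (1 : ℝ)))
          ⊗ₖ (Matrix.of fun _ _ => (1 : ℝ) : Matrix C C ℝ))
    let A' : Matrix (B × C) (B × C) ℝ :=
      a' • (1 : Matrix (B × C) (B × C) ℝ) +
        ((b' • (1 : Matrix B B ℝ) + c' • (Matrix.of fun _ _ => (1 : ℝ)))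
          ⊗ₖ (Matrix.of fun _ _ => (1 : ℝ) : Matrix C C ℝ))
    A * A' = 1 ∧ A' * A = 1 := by
  intro D a b c a' b' c' A A'
  have hF : 1 < Real.exp ((1 - r) * α) := Real.one_lt_exp_iff.mpr (by nlinarith)
  have hEF : 0 < Real.exp α - Real.exp ((1 - r) * α) :=
    sub_pos.mpr (Real.exp_lt_exp.mpr (by nlinarith))
  have hM : 0 < Real.exp α + ((t : ℝ) - 1) * Real.exp ((1 - r) * α) - t := by
    nlinarith [mul_nonneg (Nat.cast_nonneg (α := ℝ) t) (sub_nonneg.mpr hF.le)]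
  have hD : 0 < D := by
    nlinarith [mul_nonneg (Nat.cast_nonneg (α := ℝ) s) (Nat.cast_nonneg (α := ℝ) t)]
  have hAA' : A * A' = 1 :=
    gkrrMatrix_mul_eq_one (by rw [hB]) (by rw [hC]) rfl rfl hEF.ne' hD.ne' hM.ne'
  exact ⟨hAA', mul_eq_one_comm.mp hAA'⟩

/-- explicit inverse of the generalized randomized response
transition matrix `A = a·I + (b·I_ℬ + c·𝟙_ℬ) ⊗ 𝟙_𝒞`. -/
theorem gkrr_matrix_inverse {B C : Type*} [Fintype B] [Fintype C]
    [DecidableEq B] [DecidableEq C]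
    (s t : ℕ) (hB : Fintype.card B = s) (hC : Fintype.card C = t)
    (hs : 1 ≤ s) (ht : 1 ≤ t)
    (α r : ℝ) (hα : 0 < α) (hr0 : 0 < r) (hr1 : r < 1) :
    let D : ℝ := Real.exp α + ((t : ℝ) - 1) * Real.exp ((1 - r) * α)
        + ((s : ℝ) - 1) * t
    let a : ℝ := (Real.exp α - Real.exp ((1 - r) * α)) / D
    let b : ℝ := (Real.exp ((1 - r) * α) - 1) / D
    let c : ℝ := 1 / D
    let a' : ℝ := D / (Real.exp α - Real.exp ((1 - r) * α))
    let b' : ℝ := -((Real.exp ((1 - r) * α) - 1) * D) /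
        ((Real.exp α - Real.exp ((1 - r) * α))
          * (Real.exp α + ((t : ℝ) - 1) * Real.exp ((1 - r) * α) - t))
    let c' : ℝ := -1 / (Real.exp α + ((t : ℝ) - 1) * Real.exp ((1 - r) * α) - t)
    let A : Matrix (B × C) (B × C) ℝ :=
      a • (1 : Matrix (B × C) (B × C) ℝ) +
        ((b • (1 : Matrix B B ℝ) + c • (Matrix.of fun _ _ => (1 : ℝ)))
          ⊗ₖ (Matrix.of fun _ _ => (1 : ℝ) : Matrix C C ℝ))
    let A' : Matrix (B × C) (B × C) ℝ :=
      a' • (1 : Matrix (B × C) (B × C) ℝ) +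
        ((b' • (1 : Matrix B B ℝ) + c' • (Matrix.of fun _ _ => (1 : ℝ)))
          ⊗ₖ (Matrix.of fun _ _ => (1 : ℝ) : Matrix C C ℝ))
    A * A' = 1 ∧ A' * A = 1 :=
  gkrr_matrix_inverse_general s t hB hC α r hα hr0 hr1
end

section
/- Let 𝒳 = ℬ × 𝒞 be a finite set with |ℬ| = s, |𝒞| = t, equipped with the metric d((b,c),(b',c')) = 0 if (b,c)=(b',c'), d = r if b=b' but c≠c', and d = 1 otherwise, where 0 < r < 1/2. Then for any probability distributions P, Q on 𝒳, d_EM(P, Q) ≤ r·‖P - Q‖_1 + ‖M_ℬ(P) - M_ℬ(Q)‖_1, where M_ℬ(P)(b) = Σ_{c∈𝒞} P(b,c) is the marginal of P on ℬ. -/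
open Finset

/-!
Write `P = m + p` and `Q = m + q` with `m = min P Q`; the common part `m` stays in place at no
cost, and `p` has total mass at most `‖P - Q‖₁`. In each cluster `b`, rescale `p` and `q` to the
common mass `min (M_ℬ p b) (M_ℬ q b)` and couple these shared parts independently inside the
cluster, at cost `r` per unit. What remains of `p` lives on the clusters where `M_ℬ p > M_ℬ q`, and
what remains of `q` on those where `M_ℬ q > M_ℬ p`, so the independent coupling of the two
remainders moves mass only across clusters, at cost `1` per unit; that mass is
`∑ b, (M_ℬ p b - M_ℬ q b)⁺ ≤ ‖M_ℬ P - M_ℬ Q‖₁`.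
-/

theorem sub_min_le_abs_sub (x y : ℝ) : x - min x y ≤ |x - y| := by
  rcases le_total x y with h | h
  · simp [h]
  · simpa [h] using le_abs_self (x - y)

section Transport

variable {α : Type*} [Fintype α]

structure IsCoupling (K : α → α → ℝ) (P Q : α → ℝ) : Prop where
  nonneg : ∀ z w, 0 ≤ K z w
  sum_right : ∀ z, ∑ w, K z w = P z
  sum_left : ∀ w, ∑ z, K z w = Q w

def transportCost (d K : α → α → ℝ) : ℝ := ∑ z, ∑ w, K z w * d z w

theorem IsCoupling.add {K₁ K₂ : α → α → ℝ} {P₁ P₂ Q₁ Q₂ : α → ℝ}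
    (h₁ : IsCoupling K₁ P₁ Q₁) (h₂ : IsCoupling K₂ P₂ Q₂) :
    IsCoupling (K₁ + K₂) (P₁ + P₂) (Q₁ + Q₂) where
  nonneg z w := add_nonneg (h₁.nonneg z w) (h₂.nonneg z w)
  sum_right z := by simp [sum_add_distrib, h₁.sum_right, h₂.sum_right]
  sum_left w := by simp [sum_add_distrib, h₁.sum_left, h₂.sum_left]

theorem transportCost_add (d K₁ K₂ : α → α → ℝ) :
    transportCost d (K₁ + K₂) = transportCost d K₁ + transportCost d K₂ := by
  simp only [transportCost, Pi.add_apply, add_mul, sum_add_distrib]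

theorem transportCost_nonneg {d K : α → α → ℝ} (hK : ∀ z w, 0 ≤ K z w)
    (hd : ∀ z w, 0 ≤ d z w) : 0 ≤ transportCost d K :=
  sum_nonneg fun z _ => sum_nonneg fun w _ => mul_nonneg (hK z w) (hd z w)

theorem IsCoupling.transportCost_le {K d : α → α → ℝ} {P Q : α → ℝ} {c : ℝ}
    (hK : IsCoupling K P Q) (hd : ∀ z w, K z w ≠ 0 → d z w ≤ c) :
    transportCost d K ≤ c * ∑ z, P z := by
  calc transportCost d K ≤ ∑ z, ∑ w, K z w * c := by
        refine sum_le_sum fun z _ => sum_le_sum fun w _ => ?_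
        by_cases h : K z w = 0
        · simp [h]
        · exact mul_le_mul_of_nonneg_left (hd z w h) (hK.nonneg z w)
    _ = c * ∑ z, P z := by simp_rw [← sum_mul, hK.sum_right, mul_comm]

noncomputable def diagonalCoupling [DecidableEq α] (m : α → ℝ) (z w : α) : ℝ :=
  if z = w then m z else 0

theorem isCoupling_diagonalCoupling [DecidableEq α] {m : α → ℝ} (hm : ∀ z, 0 ≤ m z) :
    IsCoupling (diagonalCoupling m) m m where
  nonneg z w := by unfold diagonalCoupling; split_ifs <;> simp [hm]
  sum_right z := by simp [diagonalCoupling]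
  sum_left w := by simp [diagonalCoupling]

theorem transportCost_diagonalCoupling [DecidableEq α] {d : α → α → ℝ} (hd : ∀ z, d z z = 0)
    (m : α → ℝ) : transportCost d (diagonalCoupling m) = 0 := by
  simp [transportCost, diagonalCoupling, ite_mul, hd]

noncomputable def indepCoupling (f g : α → ℝ) (z w : α) : ℝ := f z * g w / ∑ x, f x

theorem isCoupling_indepCoupling {f g : α → ℝ} (hf : ∀ z, 0 ≤ f z) (hg : ∀ z, 0 ≤ g z)
    (hfg : ∑ z, f z = ∑ z, g z) : IsCoupling (indepCoupling f g) f g where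
  nonneg z w := div_nonneg (mul_nonneg (hf z) (hg w)) (sum_nonneg fun x _ => hf x)
  sum_right z := by
    simp only [indepCoupling, ← sum_div, ← mul_sum, ← hfg]
    exact mul_div_cancel_of_imp fun h =>
      (sum_eq_zero_iff_of_nonneg fun x _ => hf x).1 h z (mem_univ z)
  sum_left w := by
    simp only [indepCoupling, ← sum_div, ← sum_mul, hfg]
    exact mul_div_cancel_left_of_imp fun h =>
      (sum_eq_zero_iff_of_nonneg fun x _ => hg x).1 h w (mem_univ w)

end Transport

section Clusters

variable {B C : Type*} [Fintype C]

def fstMarginal (f : B × C → ℝ) (b : B) : ℝ := ∑ c, f (b, c)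

theorem sum_fstMarginal [Fintype B] (f : B × C → ℝ) : ∑ b, fstMarginal f b = ∑ z, f z :=
  (Fintype.sum_prod_type f).symm

theorem fstMarginal_sub (f g : B × C → ℝ) :
    fstMarginal (f - g) = fstMarginal f - fstMarginal g := by
  ext b; simp [fstMarginal, sum_sub_distrib]

theorem fstMarginal_nonneg {f : B × C → ℝ} (hf : ∀ z, 0 ≤ f z) (b : B) : 0 ≤ fstMarginal f b :=
  sum_nonneg fun c _ => hf (b, c)

theorem eq_zero_of_fstMarginal_eq_zero {f : B × C → ℝ} (hf : ∀ z, 0 ≤ f z) {z : B × C}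
    (h : fstMarginal f z.1 = 0) : f z = 0 :=
  (sum_eq_zero_iff_of_nonneg fun c _ => hf (z.1, c)).1 h z.2 (mem_univ _)

-- A cluster of `f`-mass zero is sent to zero whatever `a` prescribes there, since `x / 0 = 0`.
noncomputable def scaleClusters (f : B × C → ℝ) (a : B → ℝ) (z : B × C) : ℝ :=
  f z * (a z.1 / fstMarginal f z.1)

theorem scaleClusters_nonneg {f : B × C → ℝ} {a : B → ℝ} (hf : ∀ z, 0 ≤ f z) (ha : ∀ b, 0 ≤ a b)
    (z : B × C) : 0 ≤ scaleClusters f a z :=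
  mul_nonneg (hf z) (div_nonneg (ha z.1) (fstMarginal_nonneg hf z.1))

theorem fstMarginal_scaleClusters {f : B × C → ℝ} {a : B → ℝ}
    (ha : ∀ b, fstMarginal f b = 0 → a b = 0) : fstMarginal (scaleClusters f a) = a := by
  ext b
  simp only [fstMarginal, scaleClusters, ← sum_mul]
  exact mul_div_cancel_of_imp' (ha b)

theorem fstMarginal_scaleClusters_of_le {f : B × C → ℝ} {a : B → ℝ} (ha : ∀ b, 0 ≤ a b)
    (haf : ∀ b, a b ≤ fstMarginal f b) : fstMarginal (scaleClusters f a) = a :=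
  fstMarginal_scaleClusters fun b h => le_antisymm (h ▸ haf b) (ha b)

theorem scaleClusters_add_scaleClusters_sub {f : B × C → ℝ} (hf : ∀ z, 0 ≤ f z) (a : B → ℝ) :
    scaleClusters f a + scaleClusters f (fstMarginal f - a) = f := by
  ext z
  simp only [Pi.add_apply, scaleClusters, Pi.sub_apply, ← mul_add, ← add_div, add_sub_cancel,
    ← mul_div_assoc]
  exact mul_div_cancel_of_imp (eq_zero_of_fstMarginal_eq_zero hf)

theorem ne_zero_of_scaleClusters_ne_zero {f : B × C → ℝ} {a : B → ℝ} {z : B × C}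
    (h : scaleClusters f a z ≠ 0) : a z.1 ≠ 0 :=
  (div_ne_zero_iff.1 (right_ne_zero_of_mul h)).1

noncomputable def clusterCoupling [DecidableEq B] (f g : B × C → ℝ) (z w : B × C) : ℝ :=
  if z.1 = w.1 then f z * g w / fstMarginal f z.1 else 0

theorem isCoupling_clusterCoupling [Fintype B] [DecidableEq B] {f g : B × C → ℝ}
    (hf : ∀ z, 0 ≤ f z) (hg : ∀ z, 0 ≤ g z) (hfg : fstMarginal f = fstMarginal g) :
    IsCoupling (clusterCoupling f g) f g where
  nonneg z w := by
    unfold clusterCoupling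
    split_ifs
    · exact div_nonneg (mul_nonneg (hf z) (hg w)) (fstMarginal_nonneg hf _)
    · exact le_rfl
  sum_right z := by
    rw [Fintype.sum_prod_type, sum_comm]
    simp only [clusterCoupling, sum_ite_eq, mem_univ, if_true, ← sum_div, ← mul_sum]
    change f z * fstMarginal g z.1 / _ = _
    rw [← hfg]
    exact mul_div_cancel_of_imp (eq_zero_of_fstMarginal_eq_zero hf)
  sum_left w := by
    rw [Fintype.sum_prod_type, sum_comm]
    simp only [clusterCoupling, sum_ite_eq', mem_univ, if_true, ← sum_div, ← sum_mul]
    refine mul_div_cancel_left_of_imp fun h => eq_zero_of_fstMarginal_eq_zero hg ?_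
    rwa [← hfg]

theorem fst_ne_of_indepCoupling_surplus_ne_zero [Fintype B] {p q : B × C → ℝ} {z w : B × C}
    (h : indepCoupling
        (scaleClusters p (fstMarginal p - fun b => min (fstMarginal p b) (fstMarginal q b)))
        (scaleClusters q (fstMarginal q - fun b => min (fstMarginal p b) (fstMarginal q b)))
        z w ≠ 0) :
    z.1 ≠ w.1 := by
  obtain ⟨hz, hw⟩ := mul_ne_zero_iff.1 (div_ne_zero_iff.1 h).1
  have hpz := ne_zero_of_scaleClusters_ne_zero hz
  have hqw := ne_zero_of_scaleClusters_ne_zero hw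
  rintro hzw
  rw [hzw] at hpz
  simp only [Pi.sub_apply, sub_ne_zero] at hpz hqw
  rcases min_choice (fstMarginal p w.1) (fstMarginal q w.1) with hmin | hmin
  · exact hpz hmin.symm
  · exact hqw hmin.symm

theorem exists_isCoupling_transportCost_le_mul_sum_add [Fintype B]
    {d : B × C → B × C → ℝ} {r : ℝ} (hr : 0 ≤ r) (hd_within : ∀ z w, z.1 = w.1 → d z w ≤ r)
    (hd_across : ∀ z w, z.1 ≠ w.1 → d z w ≤ 1) {p q : B × C → ℝ} (hp : ∀ z, 0 ≤ p z)
    (hq : ∀ z, 0 ≤ q z) (hpq : ∑ z, p z = ∑ z, q z) :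
    ∃ K, IsCoupling K p q ∧
      transportCost d K ≤ r * ∑ z, p z + ∑ b, |fstMarginal p b - fstMarginal q b| := by
  classical
  set a : B → ℝ := fun b => min (fstMarginal p b) (fstMarginal q b)
  have ha : ∀ b, 0 ≤ a b := fun b => le_min (fstMarginal_nonneg hp b) (fstMarginal_nonneg hq b)
  have hpa : ∀ b, 0 ≤ (fstMarginal p - a) b := fun b => sub_nonneg.2 (min_le_left _ _)
  have hqa : ∀ b, 0 ≤ (fstMarginal q - a) b := fun b => sub_nonneg.2 (min_le_right _ _)
  have hp_surplus : fstMarginal (scaleClusters p (fstMarginal p - a)) = fstMarginal p - a :=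
    fstMarginal_scaleClusters_of_le hpa fun b => sub_le_self _ (ha b)
  have hq_surplus : fstMarginal (scaleClusters q (fstMarginal q - a)) = fstMarginal q - a :=
    fstMarginal_scaleClusters_of_le hqa fun b => sub_le_self _ (ha b)
  have hK_shared := isCoupling_clusterCoupling (scaleClusters_nonneg hp ha)
    (scaleClusters_nonneg hq ha) (by
      rw [fstMarginal_scaleClusters_of_le ha fun b => min_le_left _ _,
        fstMarginal_scaleClusters_of_le ha fun b => min_le_right _ _])
  have hK_surplus := isCoupling_indepCoupling (scaleClusters_nonneg hp hpa)
    (scaleClusters_nonneg hq hqa) (by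
      rw [← sum_fstMarginal, ← sum_fstMarginal, hp_surplus, hq_surplus]
      simp only [Pi.sub_apply, sum_sub_distrib, sum_fstMarginal, hpq])
  have hK := hK_shared.add hK_surplus
  rw [scaleClusters_add_scaleClusters_sub hp, scaleClusters_add_scaleClusters_sub hq] at hK
  refine ⟨_, hK, ?_⟩
  have h_shared := hK_shared.transportCost_le (d := d) fun z w h =>
    hd_within z w (not_not.1 fun h' => h (if_neg h'))
  have h_surplus := hK_surplus.transportCost_le (d := d) fun z w h =>
    hd_across z w (fst_ne_of_indepCoupling_surplus_ne_zero h)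
  have h_shared_mass : ∑ z, scaleClusters p a z ≤ ∑ z, p z :=
    calc ∑ z, scaleClusters p a z
        ≤ ∑ z, (scaleClusters p a + scaleClusters p (fstMarginal p - a)) z :=
          sum_le_sum fun z _ => le_add_of_nonneg_right (scaleClusters_nonneg hp hpa z)
      _ = ∑ z, p z := by rw [scaleClusters_add_scaleClusters_sub hp]
  have h_surplus_mass : ∑ z, scaleClusters p (fstMarginal p - a) z ≤
      ∑ b, |fstMarginal p b - fstMarginal q b| := by
    rw [← sum_fstMarginal, hp_surplus]
    exact sum_le_sum fun b _ => sub_min_le_abs_sub _ _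
  rw [transportCost_add]
  linarith [mul_le_mul_of_nonneg_left h_shared_mass hr]

theorem exists_isCoupling_transportCost_le_mul_sum_abs_sub_add [Fintype B]
    {d : B × C → B × C → ℝ} {r : ℝ} (hr : 0 ≤ r) (hd_diag : ∀ z, d z z = 0)
    (hd_within : ∀ z w, z.1 = w.1 → d z w ≤ r)
    (hd_across : ∀ z w, z.1 ≠ w.1 → d z w ≤ 1) {P Q : B × C → ℝ} (hP : ∀ z, 0 ≤ P z)
    (hQ : ∀ z, 0 ≤ Q z) (hPQ : ∑ z, P z = ∑ z, Q z) :
    ∃ K, IsCoupling K P Q ∧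
      transportCost d K ≤ r * ∑ z, |P z - Q z| + ∑ b, |fstMarginal P b - fstMarginal Q b| := by
  classical
  set m : B × C → ℝ := fun z => min (P z) (Q z)
  obtain ⟨K, hK, hcost⟩ := exists_isCoupling_transportCost_le_mul_sum_add hr hd_within hd_across
    (p := P - m) (q := Q - m) (fun z => sub_nonneg.2 (min_le_left _ _))
    (fun z => sub_nonneg.2 (min_le_right _ _)) (by simp only [Pi.sub_apply, sum_sub_distrib, hPQ])
  have hK' := (isCoupling_diagonalCoupling fun z => le_min (hP z) (hQ z)).add hK
  rw [add_sub_cancel, add_sub_cancel] at hK'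
  refine ⟨_, hK', ?_⟩
  have h_excess : ∑ z, (P z - m z) ≤ ∑ z, |P z - Q z| :=
    sum_le_sum fun z _ => sub_min_le_abs_sub _ _
  rw [fstMarginal_sub, fstMarginal_sub] at hcost
  simp only [Pi.sub_apply, sub_sub_sub_cancel_right] at hcost
  rw [transportCost_add, transportCost_diagonalCoupling hd_diag, zero_add]
  linarith [mul_le_mul_of_nonneg_left h_excess hr]

end Clusters

theorem clustered_emd_upper_bound_general {B C : Type*} [Fintype B] [Fintype C]
    [DecidableEq B] [DecidableEq C]
    (r : ℝ) (hr0 : 0 < r)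
    (P Q : B × C → ℝ)
    (hP0 : ∀ z, 0 ≤ P z) (hP1 : ∑ z, P z = 1)
    (hQ0 : ∀ z, 0 ≤ Q z) (hQ1 : ∑ z, Q z = 1) :
    sInf {c : ℝ | ∃ Cpl : (B × C) → (B × C) → ℝ, (∀ z w, 0 ≤ Cpl z w) ∧
        (∀ z, ∑ w, Cpl z w = P z) ∧ (∀ w, ∑ z, Cpl z w = Q w) ∧
        c = ∑ z, ∑ w, Cpl z w *
          (if z = w then 0 else if z.1 = w.1 then r else 1)}
      ≤ r * (∑ z, |P z - Q z|)
        + ∑ b, |(∑ c, P (b, c)) - ∑ c, Q (b, c)| := by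
  set d : B × C → B × C → ℝ := fun z w => if z = w then 0 else if z.1 = w.1 then r else 1
  have hd_nonneg : ∀ z w, 0 ≤ d z w := fun z w => by
    simp only [d]; split_ifs <;> linarith
  obtain ⟨K, hK, hcost⟩ := exists_isCoupling_transportCost_le_mul_sum_abs_sub_add (d := d) hr0.le
    (by simp [d]) (fun z w h => by simp only [d, h]; split_ifs <;> linarith)
    (fun z w h => by simp [d, h, ne_of_apply_ne Prod.fst h]) hP0 hQ0 (hP1.trans hQ1.symm)
  refine csInf_le_of_le ⟨0, ?_⟩ ⟨K, hK.nonneg, hK.sum_right, hK.sum_left, rfl⟩ hcost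
  rintro _ ⟨K', hK', -, -, rfl⟩
  exact transportCost_nonneg hK' hd_nonneg

/-- in the clustered metric space `ℬ × 𝒞`, the earth mover's
distance is bounded by `r·‖P - Q‖₁ + ‖M_ℬ(P) - M_ℬ(Q)‖₁`. -/
theorem clustered_emd_upper_bound {B C : Type*} [Fintype B] [Fintype C]
    [DecidableEq B] [DecidableEq C]
    (r : ℝ) (hr0 : 0 < r) (hr : r < 1 / 2)
    (P Q : B × C → ℝ)
    (hP0 : ∀ z, 0 ≤ P z) (hP1 : ∑ z, P z = 1)
    (hQ0 : ∀ z, 0 ≤ Q z) (hQ1 : ∑ z, Q z = 1) :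
    sInf {c : ℝ | ∃ Cpl : (B × C) → (B × C) → ℝ, (∀ z w, 0 ≤ Cpl z w) ∧
        (∀ z, ∑ w, Cpl z w = P z) ∧ (∀ w, ∑ z, Cpl z w = Q w) ∧
        c = ∑ z, ∑ w, Cpl z w *
          (if z = w then 0 else if z.1 = w.1 then r else 1)}
      ≤ r * (∑ z, |P z - Q z|)
        + ∑ b, |(∑ c, P (b, c)) - ∑ c, Q (b, c)| :=
  clustered_emd_upper_bound_general r hr0 P Q hP0 hP1 hQ0 hQ1
end
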